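/- arXiv:2207.11079 — 6 statements merged into one kernel-verified Lean document; each statement's English description precedes it below -/
import Mathlib

section
/- Let φ be as above and let Ψ ∈ F[x]^{2×2} be a matrix whose rows form a basis of ker(φ). Then det(Ψ) = c·Π(x) for some nonzero scalar c ∈ F. Conversely, if the rows of a matrix Φ ∈ F[x]^{2×2} lie in ker(φ) and det(Φ) = c·Π(x) for a nonzero c ∈ F, then the rows of Φ form a basis of ker(φ). -/
/-!
Write `D = g d`, `G = g n` with `g = gcd(D, G)` and `a d + b n = 1`. As `g` is coprime to `Π`,
`ker φ = {(W, N) : Π ∣ d W + n N}`, and this module is spanned by the two rows `(n, -d)` and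
`Π (a, b)` of a matrix `U` with `det U = Π`. Since `det U ≠ 0` these rows are a basis of `ker φ`,
so any matrix `M` with rows in `ker φ` factors as `M = A U` with `det M = det A · Π`, and its rows
form a basis exactly when `det A` is a unit of `F[x]`, that is, a nonzero constant.
-/

open Polynomial

namespace Matrix

variable {R : Type*} [CommRing R]

def rowPair (U : Matrix (Fin 2) (Fin 2) R) (i : Fin 2) : R × R := (U i 0, U i 1)

theorem linearIndependent_rowPair [IsDomain R] {U : Matrix (Fin 2) (Fin 2) R} (hU : U.det ≠ 0) :
    LinearIndependent R U.rowPair :=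
  (linearIndependent_rows_of_det_ne_zero hU).map' _ (LinearEquiv.finTwoArrow R R).ker

end Matrix

open Matrix

section

variable {R : Type*} [CommRing R] [IsDomain R] {K : Submodule R (R × R)}
  {U : Matrix (Fin 2) (Fin 2) R}

noncomputable def basisOfSpanRowPair (hU : U.det ≠ 0)
    (hK : Submodule.span R (Set.range U.rowPair) = K) : Module.Basis (Fin 2) R K :=
  (Module.Basis.span (linearIndependent_rowPair hU)).map (LinearEquiv.ofEq _ _ hK)

@[simp]
theorem coe_basisOfSpanRowPair (hU : U.det ≠ 0)
    (hK : Submodule.span R (Set.range U.rowPair) = K) (i : Fin 2) :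
    (basisOfSpanRowPair hU hK i : R × R) = U.rowPair i := by
  simp [basisOfSpanRowPair, Module.Basis.span_apply]

theorem det_eq_basis_det_mul (hU : U.det ≠ 0)
    (hK : Submodule.span R (Set.range U.rowPair) = K) {w : Fin 2 → K}
    {M : Matrix (Fin 2) (Fin 2) R} (hw : ∀ i, (w i : R × R) = M.rowPair i) :
    M.det = (basisOfSpanRowPair hU hK).det w * U.det := by
  have hM : M = ((basisOfSpanRowPair hU hK).toMatrix w)ᵀ * U := by
    ext i j
    have h := congrArg Subtype.val ((basisOfSpanRowPair hU hK).sum_repr (w i))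
    rw [hw, Submodule.coe_sum] at h
    simp only [Submodule.coe_smul, coe_basisOfSpanRowPair, Fin.sum_univ_two] at h
    rw [mul_apply, Fin.sum_univ_two]
    fin_cases j
    · exact (congrArg Prod.fst h).symm
    · exact (congrArg Prod.snd h).symm
  rw [hM, det_mul, det_transpose, Module.Basis.det_apply]

theorem exists_isUnit_det_eq_mul_of_basis (hU : U.det ≠ 0)
    (hK : Submodule.span R (Set.range U.rowPair) = K) (b : Module.Basis (Fin 2) R K)
    {M : Matrix (Fin 2) (Fin 2) R} (hb : ∀ i, (b i : R × R) = M.rowPair i) :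
    ∃ u, IsUnit u ∧ M.det = u * U.det :=
  ⟨_, (basisOfSpanRowPair hU hK).isUnit_det b, det_eq_basis_det_mul hU hK hb⟩

theorem exists_basis_of_det_eq_mul (hU : U.det ≠ 0)
    (hK : Submodule.span R (Set.range U.rowPair) = K) {M : Matrix (Fin 2) (Fin 2) R}
    (hM : ∀ i, M.rowPair i ∈ K) {u : R} (hu : IsUnit u) (hdet : M.det = u * U.det) :
    ∃ b : Module.Basis (Fin 2) R K, ∀ i, (b i : R × R) = M.rowPair i := by
  let w : Fin 2 → K := fun i => ⟨M.rowPair i, hM i⟩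
  have hw : (basisOfSpanRowPair hU hK).det w = u :=
    mul_right_cancel₀ hU ((det_eq_basis_det_mul hU hK fun _ => rfl).symm.trans hdet)
  obtain ⟨hli, hspan⟩ := (Module.Basis.is_basis_iff_det _).mpr (hw ▸ hu)
  exact ⟨.mk hli hspan.ge, fun i => by simp [w]⟩

end

section

variable {R : Type*} [CommRing R] {K : Submodule R (R × R)} {P d n a b : R}

def bezoutKernelMatrix (P d n a b : R) : Matrix (Fin 2) (Fin 2) R :=
  !![n, -d; a * P, b * P]

theorem span_rowPair_eq_of_mem_iff_dvd (hK : ∀ z, z ∈ K ↔ P ∣ d * z.1 + n * z.2)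
    (hab : a * d + b * n = 1) :
    Submodule.span R (Set.range (bezoutKernelMatrix P d n a b).rowPair) = K := by
  apply le_antisymm
  · rw [Submodule.span_le]
    rintro _ ⟨i, rfl⟩
    rw [SetLike.mem_coe, hK]
    fin_cases i
    · exact ⟨0, show d * n + n * -d = P * 0 by ring⟩
    · exact ⟨1, show d * (a * P) + n * (b * P) = P * 1 by linear_combination P * hab⟩
  · intro z hz
    obtain ⟨k, hk⟩ := (hK z).1 hz
    rw [Submodule.mem_span_range_iff_exists_fun]
    refine ⟨![b * z.1 - a * z.2, k], ?_⟩
    rw [Fin.sum_univ_two]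
    refine Prod.ext ?_ ?_
    · show (b * z.1 - a * z.2) * n + k * (a * P) = z.1
      linear_combination z.1 * hab - a * hk
    · show (b * z.1 - a * z.2) * -d + k * (b * P) = z.2
      linear_combination z.2 * hab - b * hk

theorem det_bezoutKernelMatrix (hab : a * d + b * n = 1) :
    (bezoutKernelMatrix P d n a b).det = P := by
  rw [bezoutKernelMatrix, det_fin_two_of]
  linear_combination P * hab

end

theorem EuclideanDomain.exists_isCoprime_gcd_mul {R : Type*} [EuclideanDomain R] [DecidableEq R]
    (p q : R) : ∃ p' q', IsCoprime p' q' ∧ p = gcd p q * p' ∧ q = gcd p q * q' := by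
  by_cases hg : gcd p q = 0
  · obtain ⟨rfl, rfl⟩ := EuclideanDomain.gcd_eq_zero_iff.mp hg
    exact ⟨1, 0, isCoprime_one_left, by simp, by simp⟩
  obtain ⟨p', hp⟩ := gcd_dvd_left p q
  obtain ⟨q', hq⟩ := gcd_dvd_right p q
  refine ⟨p', q', ⟨gcdA p q, gcdB p q, mul_left_cancel₀ hg ?_⟩, hp, hq⟩
  linear_combination (gcd_eq_gcd_ab p q).symm - gcdA p q * hp - gcdB p q * hq

theorem stmt_3_general {F : Type*} [Field F] [DecidableEq F] (ρ : ℕ) (x : Fin ρ → F)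
    (D G : Polynomial F)
    (Pr : Polynomial F) (hPr : Pr = ∏ i : Fin ρ, (X - C (x i)))
    (hcop : IsCoprime (EuclideanDomain.gcd D G) Pr)
    (φ : (Polynomial F × Polynomial F) →ₗ[Polynomial F]
          (Polynomial F ⧸ Ideal.span {Pr}))
    (hφ : ∀ p : Polynomial F × Polynomial F,
      φ p = Ideal.Quotient.mk (Ideal.span {Pr}) (D * p.1 + G * p.2)) :
    (∀ Ψ : Matrix (Fin 2) (Fin 2) (Polynomial F),
      (∃ b : Module.Basis (Fin 2) (Polynomial F) (LinearMap.ker φ),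
        ∀ i, (b i : Polynomial F × Polynomial F) = (Ψ i 0, Ψ i 1)) →
      ∃ c : F, c ≠ 0 ∧ Ψ.det = C c * Pr) ∧
    (∀ Φ : Matrix (Fin 2) (Fin 2) (Polynomial F),
      (∀ i, (Φ i 0, Φ i 1) ∈ LinearMap.ker φ) →
      (∃ c : F, c ≠ 0 ∧ Φ.det = C c * Pr) →
      ∃ b : Module.Basis (Fin 2) (Polynomial F) (LinearMap.ker φ),
        ∀ i, (b i : Polynomial F × Polynomial F) = (Φ i 0, Φ i 1)) := by
  have hPr0 : Pr ≠ 0 := by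
    rw [hPr]
    exact (monic_prod_of_monic _ _ fun i _ => monic_X_sub_C (x i)).ne_zero
  obtain ⟨d, n, ⟨a, b, hab⟩, hD, hG⟩ := EuclideanDomain.exists_isCoprime_gcd_mul D G
  have hK : ∀ z, z ∈ LinearMap.ker φ ↔ Pr ∣ d * z.1 + n * z.2 := by
    intro z
    rw [LinearMap.mem_ker, hφ, Ideal.Quotient.eq_zero_iff_mem, Ideal.mem_span_singleton,
      show D * z.1 + G * z.2 = EuclideanDomain.gcd D G * (d * z.1 + n * z.2) by
        linear_combination z.1 * hD + z.2 * hG]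
    exact ⟨hcop.symm.dvd_of_dvd_mul_left, fun h => h.mul_left _⟩
  have hspan := span_rowPair_eq_of_mem_iff_dvd hK hab
  have hdet := det_bezoutKernelMatrix (P := Pr) hab
  have hU : (bezoutKernelMatrix Pr d n a b).det ≠ 0 := by rwa [hdet]
  refine ⟨fun Ψ ⟨bΨ, hb⟩ => ?_, fun Φ hΦ ⟨c, hc, hdetΦ⟩ => ?_⟩
  · obtain ⟨u, hu, hΨ⟩ := exists_isUnit_det_eq_mul_of_basis hU hspan bΨ hb
    obtain ⟨c, hc, rfl⟩ := Polynomial.isUnit_iff.mp hu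
    exact ⟨c, hc.ne_zero, by rw [hΨ, hdet]⟩
  · exact exists_basis_of_det_eq_mul hU hspan hΦ (isUnit_C.mpr hc.isUnit)
      (by rw [hdetΦ, hdet])

/-- A matrix whose rows form a basis of `ker φ` has determinant `c·Π` for some
nonzero `c ∈ F`; conversely, a matrix whose rows lie in `ker φ` and whose
determinant is a nonzero scalar multiple of `Π` is a basis matrix of `ker φ`. -/
theorem stmt_3 {F : Type*} [Field F] [DecidableEq F] (ρ : ℕ) (x : Fin ρ → F)
    (hx : Function.Injective x) (D G : Polynomial F)
    (Pr : Polynomial F) (hPr : Pr = ∏ i : Fin ρ, (X - C (x i)))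
    (hcop : IsCoprime (EuclideanDomain.gcd D G) Pr)
    (φ : (Polynomial F × Polynomial F) →ₗ[Polynomial F]
          (Polynomial F ⧸ Ideal.span {Pr}))
    (hφ : ∀ p : Polynomial F × Polynomial F,
      φ p = Ideal.Quotient.mk (Ideal.span {Pr}) (D * p.1 + G * p.2)) :
    (∀ Ψ : Matrix (Fin 2) (Fin 2) (Polynomial F),
      (∃ b : Module.Basis (Fin 2) (Polynomial F) (LinearMap.ker φ),
        ∀ i, (b i : Polynomial F × Polynomial F) = (Ψ i 0, Ψ i 1)) →
      ∃ c : F, c ≠ 0 ∧ Ψ.det = C c * Pr) ∧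
    (∀ Φ : Matrix (Fin 2) (Fin 2) (Polynomial F),
      (∀ i, (Φ i 0, Φ i 1) ∈ LinearMap.ker φ) →
      (∃ c : F, c ≠ 0 ∧ Φ.det = C c * Pr) →
      ∃ b : Module.Basis (Fin 2) (Polynomial F) (LinearMap.ker φ),
        ∀ i, (b i : Polynomial F × Polynomial F) = (Φ i 0, Φ i 1)) :=
  stmt_3_general ρ x D G Pr hPr hcop φ hφ
end

section
/- The set X̄ = {X̄_0(x), X̄_1(x), …, X̄_{2^m−1}(x)}, where X̄_l(x) = ∏_τ s_τ(x)^{l_τ} / ∏_τ s_τ(v_τ)^{l_τ} with (l_0,…,l_{m−1}) the binary representation of l, is a basis of the F_{2^m}-vector space of polynomials of degree less than 2^m: deg(X̄_l) = l for all 0 ≤ l < 2^m, hence the X̄_l are linearly independent and span the space. -/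
open Polynomial

private lemma bitsum (m : ℕ) : ∀ l < 2 ^ m,
    ∑ i ∈ Finset.range m, (if l.testBit i then 2 ^ i else 0) = l := by
  induction m with
  | zero => intro l hl; interval_cases l; simp
  | succ m ih =>
    intro l hl
    have h2 : l / 2 < 2 ^ m := by
      rw [Nat.div_lt_iff_lt_mul (by norm_num)]
      calc l < 2 ^ (m + 1) := hl
        _ = 2 ^ m * 2 := by ring
    rw [Finset.sum_range_succ']
    have hrw : ∀ i, (if l.testBit (i + 1) then 2 ^ (i + 1) else 0) =
        2 * (if (l / 2).testBit i then 2 ^ i else 0) := by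
      intro i
      rw [Nat.testBit_succ]
      split <;> ring
    simp_rw [hrw, ← Finset.mul_sum, ih (l / 2) h2]
    have h0 : (if l.testBit 0 then 2 ^ 0 else 0) = l % 2 := by
      rcases Nat.mod_two_eq_zero_or_one l with h | h <;>
        simp [Nat.testBit_zero, h]
    rw [h0]
    omega

private lemma poly_aux {F : Type*} [Field F] (n : ℕ) (p : Fin n → Polynomial F)
    (h : ∀ i : Fin n, (p i).degree = ((i : ℕ) : WithBot ℕ)) :
    LinearIndependent F p ∧
      Submodule.span F (Set.range p) = Polynomial.degreeLT F n := by
  have hmem : ∀ i, p i ∈ degreeLT F n := fun i =>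
    mem_degreeLT.2 (by rw [h i]; exact_mod_cast i.isLt)
  set q : Fin n → degreeLT F n := fun i => ⟨p i, hmem i⟩ with hq
  have hnd : ∀ i, (p i).natDegree = (i : ℕ) := fun i =>
    natDegree_eq_of_degree_eq_some (h i)
  have hne : ∀ i, p i ≠ 0 := by
    intro i h0
    have hi := h i
    rw [h0, degree_zero] at hi
    exact absurd hi (by simp)
  -- the coefficient matrix is lower triangular with nonzero diagonal
  set M : Matrix (Fin n) (Fin n) F := fun i j => (p i).coeff j with hM
  have htri : M.BlockTriangular OrderDual.toDual := by
    intro i j hij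
    exact coeff_eq_zero_of_degree_lt (by rw [h i]; exact_mod_cast hij)
  have hdet : IsUnit M := by
    rw [Matrix.isUnit_iff_isUnit_det, isUnit_iff_ne_zero,
      Matrix.det_of_lowerTriangular M htri]
    apply Finset.prod_ne_zero_iff.mpr
    intro i _
    have : M i i = (p i).leadingCoeff := by
      rw [hM, Polynomial.leadingCoeff, hnd i]
    rw [this]
    exact leadingCoeff_ne_zero.mpr (hne i)
  have hrows : LinearIndependent F (fun i => M i) :=
    Matrix.linearIndependent_rows_iff_isUnit.2 hdet
  have hMq : (fun i => M i) = (degreeLTEquiv F n) ∘ q := rfl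
  have hqind : LinearIndependent F q := by
    rw [hMq] at hrows
    exact hrows.of_comp (degreeLTEquiv F n).toLinearMap
  have hpind : LinearIndependent F p := by
    have := hqind.map' (degreeLT F n).subtype (Submodule.ker_subtype _)
    exact this
  refine ⟨hpind, ?_⟩
  have hfd : FiniteDimensional F (degreeLT F n) :=
    LinearEquiv.finiteDimensional (degreeLTEquiv F n).symm
  have hcard : Fintype.card (Fin n) = Module.finrank F (degreeLT F n) := by
    rw [(degreeLTEquiv F n).finrank_eq]
    simp
  have hspan : Submodule.span F (Set.range q) = ⊤ :=
    hqind.span_eq_top_of_card_eq_finrank' hcard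
  have hp : p = ((degreeLT F n).subtype) ∘ q := rfl
  rw [hp, Set.range_comp, ← Submodule.map_span, hspan, Submodule.map_top,
    Submodule.range_subtype]

/-- The polynomials `X̄_l = ∏_τ (s_τ/s_τ(v_τ))^{l_τ}`, `0 ≤ l < 2^m`, where
`(l_τ)` are the binary digits of `l`, satisfy `deg X̄_l = l`; hence they are
linearly independent and form a basis of the space of polynomials of degree
less than `2^m`. -/
theorem stmt_10 {F : Type*} [Field F] [CharP F 2] (m : ℕ) (v : Fin m → F)
    (ω : ℕ → F) (hω : ∀ l, ω l = ∑ t : Fin m, if l.testBit t then v t else 0)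
    (s : Fin m → Polynomial F)
    (hs : ∀ τ : Fin m, s τ = ∏ l ∈ Finset.range (2 ^ (τ : ℕ)), (X - C (ω l)))
    (hsv : ∀ τ : Fin m, (s τ).eval (v τ) ≠ 0)
    (Xb : ℕ → Polynomial F)
    (hXb : ∀ l, Xb l = ∏ τ : Fin m,
      if l.testBit τ then C ((s τ).eval (v τ))⁻¹ * s τ else 1) :
    (∀ l < 2 ^ m, (Xb l).degree = (l : WithBot ℕ)) ∧
    LinearIndependent F (fun l : Fin (2 ^ m) => Xb l) ∧
    Submodule.span F (Set.range (fun l : Fin (2 ^ m) => Xb l)) =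
      Polynomial.degreeLT F (2 ^ m) := by
  have hsne : ∀ τ : Fin m, s τ ≠ 0 := by
    intro τ h0
    apply hsv τ
    rw [h0, eval_zero]
  have hsnat : ∀ τ : Fin m, (s τ).natDegree = 2 ^ (τ : ℕ) := by
    intro τ
    rw [hs τ, natDegree_prod _ _ (fun l _ => X_sub_C_ne_zero (ω l))]
    simp [natDegree_X_sub_C]
  have hfne : ∀ (l : ℕ) (τ : Fin m),
      (if l.testBit τ then C ((s τ).eval (v τ))⁻¹ * s τ else 1) ≠ 0 := by
    intro l τ
    split
    · exact mul_ne_zero (by simp [hsv τ]) (hsne τ)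
    · exact one_ne_zero
  have hfnat : ∀ (l : ℕ) (τ : Fin m),
      (if l.testBit τ then C ((s τ).eval (v τ))⁻¹ * s τ else 1).natDegree =
        (if l.testBit τ then 2 ^ (τ : ℕ) else 0) := by
    intro l τ
    split
    · rw [natDegree_C_mul (inv_ne_zero (hsv τ)), hsnat τ]
    · exact natDegree_one
  have hXbne : ∀ l : ℕ, Xb l ≠ 0 := by
    intro l
    rw [hXb l]
    exact Finset.prod_ne_zero_iff.mpr fun τ _ => hfne l τ
  have hXbnat : ∀ l < 2 ^ m, (Xb l).natDegree = l := by
    intro l hl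
    rw [hXb l, natDegree_prod _ _ (fun τ _ => hfne l τ)]
    simp_rw [hfnat l]
    rw [Fin.sum_univ_eq_sum_range (fun i => if l.testBit i then 2 ^ i else 0) m]
    exact bitsum m l hl
  have hdeg : ∀ l < 2 ^ m, (Xb l).degree = (l : WithBot ℕ) := by
    intro l hl
    rw [degree_eq_natDegree (hXbne l), hXbnat l hl]
  obtain ⟨h1, h2⟩ := poly_aux (2 ^ m) (fun l : Fin (2 ^ m) => Xb l)
    (fun i => hdeg i i.isLt)
  exact ⟨hdeg, h1, h2⟩
end

section
/- Suppose the received word differs from a codeword evaluation of f (with deg f < 2^m − 2^μ) in at most 2^{μ−1} positions, the error locator λ(x) = ∏_{a∈E}(x − a) where E is the error set, and r(x) interpolates the received values. Write f·λ ≡ r·λ (mod s_m) and derive z(x) = u(x)λ(x) + q(x)s_μ(x) as in the paper with deg(z) < deg(λ). Then for any error location ω_l ∈ E that is a message location, taking the formal derivative of f·λ = r·λ + q·s_m and evaluating at ω_l yields f(ω_l) − r(ω_l) = z(ω_l)/(s_μ(ω_l)·λ'(ω_l)), i.e., the error value satisfies Forney's formula. -/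
open Polynomial

/-- Forney's formula. Let `λ = ∏_{a ∈ E} (x - a)` be the error locator over
`F_{2^m}`, let `f·λ = r·λ + q·s_m` with `s_m = x^{2^m} - x`, and let
`z = u·λ + q·s_μ` be the derived key equation. Then for every error location
`ω ∈ E` at a message location (`s_μ(ω) ≠ 0`), the error value satisfies
`f(ω) - r(ω) = z(ω) / (s_μ(ω)·λ'(ω))`. -/
theorem stmt_13 (m : ℕ) (hm : 1 ≤ m)
    (f r q u z sμ : Polynomial (GaloisField 2 m))
    (E : Finset (GaloisField 2 m))
    (lam : Polynomial (GaloisField 2 m)) (hlam : lam = ∏ a ∈ E, (X - C a))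
    (key : f * lam = r * lam + q * (X ^ (2 ^ m) - X))
    (hz : z = u * lam + q * sμ)
    (ω : GaloisField 2 m) (hω : ω ∈ E) (hmsg : sμ.eval ω ≠ 0) :
    f.eval ω - r.eval ω =
      z.eval ω / (sμ.eval ω * (Polynomial.derivative lam).eval ω) := by
  classical
  have hchar : (2 : GaloisField 2 m) = 0 := by
    have := CharP.cast_eq_zero (GaloisField 2 m) 2
    exact_mod_cast this
  -- λ(ω) = 0
  have hlam0 : lam.eval ω = 0 := by
    rw [hlam, eval_prod]
    exact Finset.prod_eq_zero hω (by simp)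
  -- λ'(ω) ≠ 0
  have hder : (Polynomial.derivative lam).eval ω =
      ((E.val.erase ω).map (fun a => ω - a)).prod := by
    rw [hlam]
    have : (∏ a ∈ E, (X - C a)) = (E.val.map (fun a => X - C a)).prod := rfl
    rw [this, eval_multiset_prod_X_sub_C_derivative (by simpa using hω)]
  have hder0 : (Polynomial.derivative lam).eval ω ≠ 0 := by
    rw [hder]
    apply Multiset.prod_ne_zero
    intro h0
    rcases Multiset.mem_map.mp h0 with ⟨a, ha, hae⟩
    have : a = ω := by
      have := sub_eq_zero.mp hae
      exact this.symm
    exact (E.nodup.notMem_erase) (this ▸ ha)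
  -- s_m(ω) = 0
  have : Fintype (GaloisField 2 m) := Fintype.ofFinite _
  have hcard : Fintype.card (GaloisField 2 m) = 2 ^ m := by
    have := GaloisField.card 2 m (by omega)
    simpa [Nat.card_eq_fintype_card] using this
  have hsm0 : ω ^ (2 ^ m) = ω := by
    rw [← hcard]; exact FiniteField.pow_card ω
  -- derivative of key equation evaluated at ω
  have dkey := congrArg Polynomial.derivative key
  rw [derivative_mul, derivative_add, derivative_mul, derivative_mul,
    derivative_sub, derivative_X_pow, derivative_X] at dkey
  have ev := congrArg (Polynomial.eval ω) dkey
  simp only [eval_add, eval_mul, eval_sub, eval_pow, eval_X, eval_one, eval_C, eval_natCast,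
    hlam0, mul_zero, zero_mul, add_zero, zero_add, hsm0, sub_self] at ev
  -- (2^m : F) = 0
  have h2m : (((2 ^ m : ℕ)) : GaloisField 2 m) = 0 := by
    push_cast
    rw [hchar]
    exact zero_pow (by omega)
  rw [h2m] at ev
  simp only [zero_mul, mul_zero, zero_sub, mul_neg, mul_one, zero_add] at ev
  -- ev : f.eval ω * λ'(ω) = r.eval ω * λ'(ω) + -(q.eval ω)  (roughly)
  have hzω : z.eval ω = q.eval ω * sμ.eval ω := by
    rw [hz]; simp [hlam0]
  rw [eq_div_iff (mul_ne_zero hmsg hder0), hzω]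
  linear_combination (sμ.eval ω) * ev - (q.eval ω * sμ.eval ω) * hchar
end

section
/- Let f ∈ F_{2^m}[x] with deg(f) ≤ 2^μ, and suppose f agrees with a polynomial f̂ of degree < 2^μ at the 2^μ points ω_0 + β, …, ω_{2^μ−1} + β. Then f(x) = (f(ω_{2^μ}+β) − f̂(ω_{2^μ}+β))·(X̄_{2^μ}(x) − s_μ(β)/s_μ(v_μ)) + f̂(x). In particular the right-hand side agrees with f at all 2^μ + 1 points ω_0+β, …, ω_{2^μ}+β and has degree ≤ 2^μ, so it equals f. -/
/-!
In characteristic 2 the points `ω_l` (`l < 2^μ`) form an additive group under `ω_i + ω_l = ω_(i xor l)`,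
so translating by `ω_i` permutes the roots of `s_μ` and `s_μ(ω_i + x) = s_μ(x)`. Hence `s_μ(x + b)`
and `s_μ(x) + s_μ(b)`, both monic of degree `2^μ`, agree at the `2^μ` roots and coincide: `s_μ` is
additive. The right-hand side therefore equals `f̂ = f` at `ω_i + β` for `i < 2^μ` and
`f(v_μ + β)` at `ω_(2^μ) + β = v_μ + β`; having degree `≤ 2^μ`, like `f`, it equals `f`.
-/

open Polynomial Finset

section BitCombination

variable {F : Type*} {m : ℕ}

def bitCombination [AddCommMonoid F] (v : Fin m → F) (l : ℕ) : F :=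
  ∑ t : Fin m, if l.testBit t then v t else 0

theorem bitCombination_two_pow [AddCommMonoid F] (v : Fin m → F) {μ : ℕ} (hμ : μ < m) :
    bitCombination v (2 ^ μ) = v ⟨μ, hμ⟩ := by
  rw [bitCombination, sum_eq_single ⟨μ, hμ⟩]
  · simp
  · intro t _ ht
    simp [Ne.symm (Fin.val_ne_of_ne ht)]
  · simp

theorem bitCombination_xor [Ring F] [CharP F 2] (v : Fin m → F) (i j : ℕ) :
    bitCombination v (i ^^^ j) = bitCombination v i + bitCombination v j := by
  simp only [bitCombination, ← sum_add_distrib, Nat.testBit_xor]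
  refine sum_congr rfl fun t _ => ?_
  cases i.testBit t <;> cases j.testBit t <;> simp [CharTwo.add_self_eq_zero]

end BitCombination

section SubspacePoly

variable {F : Type*} [CommRing F] (ω : ℕ → F) (μ : ℕ)

noncomputable def subspacePoly : F[X] :=
  ∏ l ∈ range (2 ^ μ), (X - C (ω l))

theorem subspacePoly_monic : (subspacePoly ω μ).Monic :=
  monic_prod_of_monic _ _ fun l _ => monic_X_sub_C (ω l)

theorem natDegree_subspacePoly [Nontrivial F] : (subspacePoly ω μ).natDegree = 2 ^ μ := by
  simp [subspacePoly]

theorem degree_subspacePoly [Nontrivial F] : (subspacePoly ω μ).degree = (2 ^ μ : ℕ) := by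
  rw [degree_eq_natDegree (subspacePoly_monic ω μ).ne_zero, natDegree_subspacePoly]

variable {ω μ}

theorem eval_subspacePoly_of_lt {l : ℕ} (hl : l < 2 ^ μ) : (subspacePoly ω μ).eval (ω l) = 0 := by
  rw [subspacePoly, eval_prod]
  exact prod_eq_zero (mem_range.2 hl) (by simp)

theorem eval_subspacePoly_ne_zero [IsDomain F] {x : F} (hx : ∀ l < 2 ^ μ, ω l ≠ x) :
    (subspacePoly ω μ).eval x ≠ 0 := by
  rw [subspacePoly, eval_prod, prod_ne_zero_iff]
  intro l hl
  simpa [sub_eq_zero] using (hx l (mem_range.1 hl)).symm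

end SubspacePoly

section SubspacePolyOfBits

variable {F : Type*} [CommRing F] [CharP F 2] {m : ℕ} {v : Fin m → F} {μ : ℕ}

theorem eval_subspacePoly_bitCombination_add {i : ℕ} (hi : i < 2 ^ μ) (x : F) :
    (subspacePoly (bitCombination v) μ).eval (bitCombination v i + x) =
      (subspacePoly (bitCombination v) μ).eval x := by
  simp only [subspacePoly, eval_prod, eval_sub, eval_X, eval_C]
  refine prod_nbij' (· ^^^ i) (· ^^^ i) ?_ ?_ (by simp) (by simp) fun l _ => ?_
  · exact fun l hl => mem_range.2 (Nat.xor_lt_two_pow (mem_range.1 hl) hi)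
  · exact fun l hl => mem_range.2 (Nat.xor_lt_two_pow (mem_range.1 hl) hi)
  · rw [bitCombination_xor, CharTwo.sub_eq_add, CharTwo.sub_eq_add]
    ring

theorem eval_subspacePoly_add [IsDomain F]
    (hinj : Set.InjOn (bitCombination v) (range (2 ^ μ))) (a b : F) :
    (subspacePoly (bitCombination v) μ).eval (a + b) =
      (subspacePoly (bitCombination v) μ).eval a + (subspacePoly (bitCombination v) μ).eval b := by
  set s := subspacePoly (bitCombination v) μ
  have hpos : 0 < s.degree := by
    rw [degree_subspacePoly]; exact_mod_cast Nat.two_pow_pos μ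
  have htaylor : taylor b s = s + C (s.eval b) := by
    refine eq_of_degree_le_of_eval_index_eq (range (2 ^ μ)) hinj ?_ ?_ ?_ fun l hl => ?_
    · rw [degree_taylor, degree_subspacePoly, card_range]
    · rw [degree_taylor, degree_add_C hpos]
    · rw [leadingCoeff_taylor, leadingCoeff_add_of_degree_lt' (degree_C_le.trans_lt hpos)]
    · rw [taylor_eval, eval_subspacePoly_bitCombination_add (mem_range.1 hl), eval_add, eval_C,
        eval_subspacePoly_of_lt (mem_range.1 hl), zero_add]
  simpa [taylor_eval] using congr_arg (eval a) htaylor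

end SubspacePolyOfBits

section Degree

variable {R : Type*} [CommRing R]

theorem degree_C_mul_sub_C_add_le {p q : R[X]} {n : ℕ} (hp : p.degree ≤ n) (hq : q.degree ≤ n)
    (a b c : R) : (C c * (C a * p - C b) + q).degree ≤ n := by
  have hC : ∀ r : R, C r ∈ degreeLE R n := fun r =>
    mem_degreeLE.2 (degree_C_le.trans (WithBot.coe_le_coe.2 (Nat.zero_le _)))
  rw [← mem_degreeLE, ← smul_eq_C_mul, ← smul_eq_C_mul]
  exact add_mem (Submodule.smul_mem _ _ (sub_mem (Submodule.smul_mem _ _ (mem_degreeLE.2 hp))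
    (hC _))) (mem_degreeLE.2 hq)

theorem eval_add_C_mul_sub_C_mul_eval {s : R[X]}
    (hs : ∀ a b, s.eval (a + b) = s.eval a + s.eval b) (d β y : R) :
    (C d * s - C (s.eval β * d)).eval (y + β) = s.eval y * d := by
  rw [eval_sub, eval_mul, eval_C, eval_C, hs]
  ring

end Degree

/-- If `deg f ≤ 2^μ` and `f` agrees with a polynomial `f̂` of degree `< 2^μ`
at the `2^μ` points `ω_i + β` (`i < 2^μ`), then
`f = (f(ω_{2^μ}+β) - f̂(ω_{2^μ}+β))·(X̄_{2^μ} - s_μ(β)/s_μ(v_μ)) + f̂`,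
where `X̄_{2^μ} = s_μ / s_μ(v_μ)` and `ω_{2^μ} = v_μ`. -/
theorem stmt_14 {F : Type*} [Field F] [CharP F 2] (m μ : ℕ) (hμ : μ < m)
    (v : Fin m → F)
    (ω : ℕ → F) (hω : ∀ l, ω l = ∑ t : Fin m, if l.testBit t then v t else 0)
    (hinj : ∀ i ≤ 2 ^ μ, ∀ j ≤ 2 ^ μ, ω i = ω j → i = j)
    (sμ : Polynomial F)
    (hsμ : sμ = ∏ l ∈ Finset.range (2 ^ μ), (X - C (ω l)))
    (β : F) (f fh : Polynomial F)
    (hf : f.degree ≤ ((2 ^ μ : ℕ) : WithBot ℕ))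
    (hfh : fh.degree < ((2 ^ μ : ℕ) : WithBot ℕ))
    (hagree : ∀ i < 2 ^ μ, f.eval (ω i + β) = fh.eval (ω i + β)) :
    f = C (f.eval (ω (2 ^ μ) + β) - fh.eval (ω (2 ^ μ) + β)) *
          (C ((sμ.eval (v ⟨μ, hμ⟩))⁻¹) * sμ -
            C (sμ.eval β * (sμ.eval (v ⟨μ, hμ⟩))⁻¹)) + fh := by
  obtain rfl : ω = bitCombination v := funext hω
  obtain rfl : sμ = subspacePoly (bitCombination v) μ := hsμ
  set ω := bitCombination v
  set s := subspacePoly ω μ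
  have hinjOn : Set.InjOn (fun i => ω i + β) (range (2 ^ μ + 1)) := fun i hi j hj hij =>
    hinj i (Nat.lt_succ_iff.1 (mem_range.1 hi)) j (Nat.lt_succ_iff.1 (mem_range.1 hj))
      (add_right_cancel hij)
  have hadd : ∀ a b, s.eval (a + b) = s.eval a + s.eval b := eval_subspacePoly_add
    fun i hi j hj => hinj i (mem_range.1 hi).le j (mem_range.1 hj).le
  have hv : ω (2 ^ μ) = v ⟨μ, hμ⟩ := bitCombination_two_pow v hμ
  have hsv : s.eval (v ⟨μ, hμ⟩) ≠ 0 := eval_subspacePoly_ne_zero fun l hl h =>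
    hl.ne (hinj l hl.le _ le_rfl (h.trans hv.symm))
  refine eq_of_degree_sub_lt_of_eval_index_eq _ hinjOn ?_ fun i hi => ?_
  · have hdeg := degree_C_mul_sub_C_add_le (degree_subspacePoly ω μ).le hfh.le
      (s.eval (v ⟨μ, hμ⟩))⁻¹ (s.eval β * (s.eval (v ⟨μ, hμ⟩))⁻¹)
      (f.eval (ω (2 ^ μ) + β) - fh.eval (ω (2 ^ μ) + β))
    rw [card_range]
    exact ((degree_sub_le _ _).trans (max_le hf hdeg)).trans_lt
      (by exact_mod_cast Nat.lt_succ_self _)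
  · simp only [eval_add, eval_mul, eval_C, eval_add_C_mul_sub_C_mul_eval hadd]
    rcases (Nat.lt_succ_iff.1 (mem_range.1 hi)).lt_or_eq with hi | rfl
    · rw [eval_subspacePoly_of_lt hi, hagree i hi]
      ring
    · rw [hv, mul_inv_cancel₀ hsv]
      ring
end

section
/- Let r(x) = Σ_{l=0}^{2^m−1} r̄_l X̄_l(x) over F_{2^m}. When r is divided (with remainder) by the monic-scalar-multiple polynomial p·X̄_{2^m−2^μ}(x), the quotient is u(x) = Σ_{j=0}^{2^μ−1} (r̄_{j+2^m−2^μ}/p)·X̄_j(x), where p = p_{2^m−2^μ} is the normalizing constant making p·X̄_{2^m−2^μ} monic. -/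
/-!
`X̄_l` is the product of the normalized factors `s_τ / s_τ(v_τ)` over the binary
digits `τ` of `l`, so `deg X̄_l = l`; and since the digits of `j < 2^μ` and of `2^m - 2^μ` are
disjoint, `X̄_{2^m-2^μ+j} = X̄_{2^m-2^μ} · X̄_j`. Hence `r` splits as a part of degree
`< 2^m - 2^μ` plus `p X̄_{2^m-2^μ} · u`, and uniqueness of division with remainder gives `u`.
-/

open Polynomial

theorem Nat.sum_range_ite_testBit_two_pow {m l : ℕ} (hl : l < 2 ^ m) :
    ∑ τ ∈ Finset.range m, (if l.testBit τ then 2 ^ τ else 0) = l := by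
  rw [← Finset.sum_filter]
  convert Finset.sum_toFinset_bitIndices_two_pow l using 2
  ext τ
  simp only [Finset.mem_filter, Finset.mem_range, List.mem_toFinset, Nat.mem_bitIndices,
    and_iff_right_iff_imp]
  intro hτ
  exact (Nat.pow_lt_pow_iff_right (by norm_num)).1 ((Nat.ge_two_pow_of_testBit hτ).trans_lt hl)

section BitProd

variable {M : Type*} [CommMonoid M] {m : ℕ}

def bitProd (f : Fin m → M) (l : ℕ) : M :=
  ∏ τ : Fin m, if l.testBit τ then f τ else 1

theorem bitProd_two_pow_mul_add (f : Fin m → M) (k : ℕ) {μ j : ℕ} (hj : j < 2 ^ μ) :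
    bitProd f (2 ^ μ * k + j) = bitProd f (2 ^ μ * k) * bitProd f j := by
  simp only [bitProd, ← Finset.prod_mul_distrib]
  refine Finset.prod_congr rfl fun τ _ => ?_
  rw [Nat.testBit_two_pow_mul_add k hj, mul_comm (2 ^ μ), Nat.testBit_mul_two_pow]
  by_cases hτ : (τ : ℕ) < μ
  · simp [hτ, not_le.2 hτ]
  · have hjτ : j.testBit τ = false :=
      Nat.testBit_eq_false_of_lt (hj.trans_le (Nat.pow_le_pow_right two_pos (not_lt.1 hτ)))
    simp [hτ, hjτ, not_lt.1 hτ]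

theorem natDegree_bitProd {R : Type*} [CommSemiring R] [NoZeroDivisors R] [Nontrivial R]
    {f : Fin m → R[X]} (hdeg : ∀ τ : Fin m, (f τ).natDegree = 2 ^ (τ : ℕ))
    {l : ℕ} (hl : l < 2 ^ m) : (bitProd f l).natDegree = l := by
  have hf (τ : Fin m) : f τ ≠ 0 := ne_zero_of_natDegree_gt (hdeg τ ▸ Nat.two_pow_pos τ)
  rw [bitProd, natDegree_prod _ _ fun τ _ => by split_ifs; exacts [hf τ, one_ne_zero]]
  calc ∑ τ : Fin m, (if l.testBit τ then f τ else 1).natDegree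
      = ∑ τ : Fin m, if l.testBit τ then 2 ^ (τ : ℕ) else 0 :=
        Finset.sum_congr rfl fun τ _ => by split_ifs <;> simp [hdeg]
    _ = l := by
        rw [Fin.sum_univ_eq_sum_range (fun τ => if l.testBit τ then 2 ^ τ else 0)]
        exact Nat.sum_range_ite_testBit_two_pow hl

end BitProd

theorem Polynomial.degree_sum_range_C_mul_lt {R : Type*} [Semiring R] {B : ℕ → R[X]} {n : ℕ}
    (hB : ∀ l < n, (B l).natDegree ≤ l) (c : ℕ → R) :
    (∑ l ∈ Finset.range n, C (c l) * B l).degree < n := by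
  rw [← mem_degreeLT]
  refine Submodule.sum_mem _ fun l hl => ?_
  rw [← smul_eq_C_mul]
  refine Submodule.smul_mem _ _ (mem_degreeLT.2 ?_)
  have hln := Finset.mem_range.1 hl
  exact (degree_le_natDegree.trans (WithBot.coe_le_coe.2 (hB l hln))).trans_lt
    (WithBot.coe_lt_coe.2 hln)

theorem Polynomial.natDegree_prod_X_sub_C {R ι : Type*} [CommRing R] [Nontrivial R]
    (s : Finset ι) (f : ι → R) : (∏ i ∈ s, (X - C (f i))).natDegree = s.card := by
  simp [natDegree_prod_of_monic _ _ fun i _ => monic_X_sub_C (f i)]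

theorem Polynomial.sum_range_add_C_mul_divByMonic {K : Type*} [Field K] {B : ℕ → K[X]} {N n : ℕ}
    (hB : ∀ l ≤ N, (B l).natDegree = l) (hmul : ∀ j < n, B (N + j) = B N * B j)
    {p : K} (hmonic : (C p * B N).Monic) (c : ℕ → K) :
    (∑ l ∈ Finset.range (N + n), C (c l) * B l) /ₘ (C p * B N) =
      ∑ j ∈ Finset.range n, C (c (N + j) / p) * B j := by
  have hp : p ≠ 0 := by rintro rfl; simp at hmonic
  have hupper : ∑ j ∈ Finset.range n, C (c (N + j)) * B (N + j) =
      C p * B N * ∑ j ∈ Finset.range n, C (c (N + j) / p) * B j := by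
    rw [Finset.mul_sum]
    refine Finset.sum_congr rfl fun j hj => ?_
    rw [hmul j (Finset.mem_range.1 hj), ← mul_div_cancel₀ (c (N + j)) hp, C_mul,
      mul_div_cancel_left₀ _ hp]
    ring
  rw [Finset.sum_range_add, hupper]
  refine (div_modByMonic_unique _ _ hmonic ⟨rfl, ?_⟩).1
  rw [degree_eq_natDegree hmonic.ne_zero, natDegree_C_mul hp, hB N le_rfl]
  exact degree_sum_range_C_mul_lt (fun l hl => (hB l hl.le).le) c

theorem stmt_18_general {F : Type*} [Field F] (m μ : ℕ) (hμ : μ ≤ m)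
    (v : Fin m → F)
    (ω : ℕ → F)
    (s : Fin m → Polynomial F)
    (hs : ∀ τ : Fin m, s τ = ∏ l ∈ Finset.range (2 ^ (τ : ℕ)), (X - C (ω l)))
    (hsv : ∀ τ : Fin m, (s τ).eval (v τ) ≠ 0)
    (Xb : ℕ → Polynomial F)
    (hXb : ∀ l, Xb l = ∏ τ : Fin m,
      if l.testBit τ then C ((s τ).eval (v τ))⁻¹ * s τ else 1)
    (p : F) (hmonic : (C p * Xb (2 ^ m - 2 ^ μ)).Monic)
    (rc : ℕ → F) (r : Polynomial F)
    (hr : r = ∑ l ∈ Finset.range (2 ^ m), C (rc l) * Xb l) :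
    r /ₘ (C p * Xb (2 ^ m - 2 ^ μ)) =
      ∑ j ∈ Finset.range (2 ^ μ), C (rc (j + 2 ^ m - 2 ^ μ) / p) * Xb j := by
  set N := 2 ^ m - 2 ^ μ
  have hNμ : 2 ^ m = N + 2 ^ μ := (Nat.sub_add_cancel (Nat.pow_le_pow_right two_pos hμ)).symm
  have hN : N = 2 ^ μ * (2 ^ (m - μ) - 1) := by
    rw [Nat.mul_sub_one, ← pow_add, Nat.add_sub_cancel' hμ]
  have hXb_eq : Xb = bitProd fun τ => C ((s τ).eval (v τ))⁻¹ * s τ := funext hXb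
  have hN_lt : N < 2 ^ m := Nat.sub_lt (Nat.two_pow_pos m) (Nat.two_pow_pos μ)
  have hdeg (l : ℕ) (hl : l ≤ N) : (Xb l).natDegree = l := by
    refine hXb_eq ▸ natDegree_bitProd (fun τ => ?_) (hl.trans_lt hN_lt)
    rw [natDegree_C_mul (inv_ne_zero (hsv τ)), hs, natDegree_prod_X_sub_C, Finset.card_range]
  have hmul (j : ℕ) (hj : j < 2 ^ μ) : Xb (N + j) = Xb N * Xb j := by
    rw [hXb_eq, hN, bitProd_two_pow_mul_add _ _ hj]
  rw [hr, hNμ, sum_range_add_C_mul_divByMonic hdeg hmul hmonic]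
  exact Finset.sum_congr rfl fun j _ => by rw [← Nat.add_assoc, Nat.add_sub_cancel, Nat.add_comm j]

/-- Writing `r = Σ_{l<2^m} r̄_l X̄_l` in the novel polynomial basis, the
quotient of `r` upon division by the monic polynomial `p·X̄_{2^m-2^μ}` is
`u = Σ_{j<2^μ} (r̄_{j+2^m-2^μ}/p)·X̄_j`. -/
theorem stmt_18 {F : Type*} [Field F] [CharP F 2] (m μ : ℕ) (hμ : μ ≤ m)
    (v : Fin m → F)
    (ω : ℕ → F) (hω : ∀ l, ω l = ∑ t : Fin m, if l.testBit t then v t else 0)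
    (s : Fin m → Polynomial F)
    (hs : ∀ τ : Fin m, s τ = ∏ l ∈ Finset.range (2 ^ (τ : ℕ)), (X - C (ω l)))
    (hsv : ∀ τ : Fin m, (s τ).eval (v τ) ≠ 0)
    (Xb : ℕ → Polynomial F)
    (hXb : ∀ l, Xb l = ∏ τ : Fin m,
      if l.testBit τ then C ((s τ).eval (v τ))⁻¹ * s τ else 1)
    (p : F) (hp : p ≠ 0) (hmonic : (C p * Xb (2 ^ m - 2 ^ μ)).Monic)
    (rc : ℕ → F) (r : Polynomial F)
    (hr : r = ∑ l ∈ Finset.range (2 ^ m), C (rc l) * Xb l) :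
    r /ₘ (C p * Xb (2 ^ m - 2 ^ μ)) =
      ∑ j ∈ Finset.range (2 ^ μ), C (rc (j + 2 ^ m - 2 ^ μ) / p) * Xb j :=
  stmt_18_general m μ hμ v ω s hs hsv Xb hXb p hmonic rc r hr
end

section
/- Let Q₁ = ker(φ₁) ∩ ⋯ ∩ ker(φ_{j−1}) with irreducible basis matrix Ψ of determinant c∏_{l<j}(x−x_l), c ≠ 0, let ψ(v) = v·Ψ be the associated projection, and let Ψ_j be a basis matrix of ker(φ_j ∘ ψ) with det(Ψ_j) = c_j(x − x_j), c_j ≠ 0. Then Ψ_j·Ψ is a basis matrix of Q₁ ∩ ker(φ_j), and det(Ψ_j·Ψ) = c·c_j·∏_{l=1}^{j}(x − x_l). -/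
/-!
Writing `ψ` for the map `v ↦ v·Ψ`, the rows of `Ψ` form a basis of `Q₁`, so `ψ` is injective
with image `Q₁`. Hence `ψ` maps `ker(φ_j ∘ ψ) = ψ⁻¹(ker φ_j)` isomorphically onto
`Q₁ ∩ ker φ_j`, and carries the basis formed by the rows of `Ψ_j` to the rows of `Ψ_j·Ψ`.
-/

open Polynomial

theorem Submodule.exists_basis_inf_of_eq_comap {ι R N M : Type*} [Semiring R]
    [AddCommMonoid N] [Module R N] [AddCommMonoid M] [Module R M]
    (ψ : N →ₗ[R] M) (hψ : Function.Injective ψ) {Q P : Submodule R M}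
    (hQ : LinearMap.range ψ = Q) {S : Submodule R N} (hS : S = P.comap ψ)
    (bS : Module.Basis ι R S) :
    ∃ b : Module.Basis ι R ↥(Q ⊓ P), ∀ i, (b i : M) = ψ (bS i) := by
  subst hQ hS
  exact ⟨bS.map ((Submodule.equivMapOfInjective ψ hψ _).trans
    (LinearEquiv.ofEq _ _ (Submodule.map_comap_eq ψ P))), fun _ => rfl⟩

theorem Module.Basis.exists_linearMap_prod_of_fin_two {R M : Type*} [Semiring R]
    [AddCommMonoid M] [Module R M] {Q : Submodule R M} (b : Module.Basis (Fin 2) R Q) :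
    ∃ ψ : R × R →ₗ[R] M, Function.Injective ψ ∧ LinearMap.range ψ = Q ∧
      ∀ p, ψ p = p.1 • (b 0 : M) + p.2 • (b 1 : M) := by
  let e : (R × R) ≃ₗ[R] Q := (LinearEquiv.finTwoArrow R R).symm.trans b.equivFun.symm
  refine ⟨Q.subtype ∘ₗ e.toLinearMap, Q.injective_subtype.comp e.injective, ?_, fun p => ?_⟩
  · rw [LinearMap.range_comp_of_range_eq_top _ e.range, Submodule.range_subtype]
  · simp [e, Module.Basis.equivFun_symm_apply, Fin.sum_univ_two]

theorem stmt_19_general {F : Type*} [Field F] (n : ℕ) (x : Fin (n + 1) → F)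
    (K : Fin (n + 1) → Submodule (Polynomial F) (Polynomial F × Polynomial F))
    (Q1 : Submodule (Polynomial F) (Polynomial F × Polynomial F))
    (Ψ Ψj : Matrix (Fin 2) (Fin 2) (Polynomial F))
    (b : Module.Basis (Fin 2) (Polynomial F) Q1)
    (hb : ∀ i, (b i : Polynomial F × Polynomial F) = (Ψ i 0, Ψ i 1))
    (c : F)
    (hdet : Ψ.det = C c * ∏ l : Fin n, (X - C (x l.castSucc)))
    (S : Submodule (Polynomial F) (Polynomial F × Polynomial F))
    (hS : ∀ p : Polynomial F × Polynomial F, p ∈ S ↔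
      (p.1 * Ψ 0 0 + p.2 * Ψ 1 0, p.1 * Ψ 0 1 + p.2 * Ψ 1 1) ∈ K (Fin.last n))
    (bj : Module.Basis (Fin 2) (Polynomial F) S)
    (hbj : ∀ i, (bj i : Polynomial F × Polynomial F) = (Ψj i 0, Ψj i 1))
    (cj : F)
    (hdetj : Ψj.det = C cj * (X - C (x (Fin.last n)))) :
    (Ψj * Ψ).det = C (c * cj) * ∏ l : Fin (n + 1), (X - C (x l)) ∧
    ∃ b' : Module.Basis (Fin 2) (Polynomial F) ↥(Q1 ⊓ K (Fin.last n)),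
      ∀ i, (b' i : Polynomial F × Polynomial F) =
        ((Ψj * Ψ) i 0, (Ψj * Ψ) i 1) := by
  refine ⟨?_, ?_⟩
  · rw [Matrix.det_mul, hdet, hdetj, Fin.prod_univ_castSucc, C_mul]
    ring
  obtain ⟨ψ, hψinj, hψrange, hψ⟩ := b.exists_linearMap_prod_of_fin_two
  have hψ_vecMul : ∀ p : Polynomial F × Polynomial F,
      ψ p = (p.1 * Ψ 0 0 + p.2 * Ψ 1 0, p.1 * Ψ 0 1 + p.2 * Ψ 1 1) := by
    intro p
    simp [hψ, hb]
  have hS_comap : S = (K (Fin.last n)).comap ψ := by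
    ext p
    rw [hS, Submodule.mem_comap, hψ_vecMul]
  obtain ⟨b', hb'⟩ := Submodule.exists_basis_inf_of_eq_comap ψ hψinj hψrange hS_comap bj
  refine ⟨b', fun i => ?_⟩
  rw [hb', hbj, hψ_vecMul]
  simp [Matrix.mul_apply, Fin.sum_univ_two]

/-- One step of the modular approach. Let `K i` be the solution module of the
evaluation homomorphism `φ_i(W,N) = d_i W(x_i) + g_i N(x_i)`, let `Ψ` be a
basis matrix of `Q₁ = K 1 ∩ ⋯ ∩ K (j-1)` with `det Ψ = c·∏_{l<j}(x - x_l)`,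
let `ψ(v) = v·Ψ` be the associated projection, and let `Ψ_j` be a basis matrix
of `ker(φ_j ∘ ψ)` with `det Ψ_j = c_j (x - x_j)`. Then `Ψ_j·Ψ` is a basis
matrix of `Q₁ ∩ K j` and `det (Ψ_j·Ψ) = c·c_j·∏_{l≤j}(x - x_l)`. -/
theorem stmt_19 {F : Type*} [Field F] (n : ℕ) (x : Fin (n + 1) → F)
    (hx : Function.Injective x) (d g : Fin (n + 1) → F)
    (hdg : ∀ i, (d i, g i) ≠ (0, 0))
    (K : Fin (n + 1) → Submodule (Polynomial F) (Polynomial F × Polynomial F))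
    (hK : ∀ i, ∀ p : Polynomial F × Polynomial F,
      p ∈ K i ↔ d i * p.1.eval (x i) + g i * p.2.eval (x i) = 0)
    (Q1 : Submodule (Polynomial F) (Polynomial F × Polynomial F))
    (hQ1 : Q1 = ⨅ i : Fin n, K i.castSucc)
    (Ψ Ψj : Matrix (Fin 2) (Fin 2) (Polynomial F))
    (b : Module.Basis (Fin 2) (Polynomial F) Q1)
    (hb : ∀ i, (b i : Polynomial F × Polynomial F) = (Ψ i 0, Ψ i 1))
    (c : F) (hc : c ≠ 0)
    (hdet : Ψ.det = C c * ∏ l : Fin n, (X - C (x l.castSucc)))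
    (S : Submodule (Polynomial F) (Polynomial F × Polynomial F))
    (hS : ∀ p : Polynomial F × Polynomial F, p ∈ S ↔
      (p.1 * Ψ 0 0 + p.2 * Ψ 1 0, p.1 * Ψ 0 1 + p.2 * Ψ 1 1) ∈ K (Fin.last n))
    (bj : Module.Basis (Fin 2) (Polynomial F) S)
    (hbj : ∀ i, (bj i : Polynomial F × Polynomial F) = (Ψj i 0, Ψj i 1))
    (cj : F) (hcj : cj ≠ 0)
    (hdetj : Ψj.det = C cj * (X - C (x (Fin.last n)))) :
    (Ψj * Ψ).det = C (c * cj) * ∏ l : Fin (n + 1), (X - C (x l)) ∧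
    ∃ b' : Module.Basis (Fin 2) (Polynomial F) ↥(Q1 ⊓ K (Fin.last n)),
      ∀ i, (b' i : Polynomial F × Polynomial F) =
        ((Ψj * Ψ) i 0, (Ψj * Ψ) i 1) :=
  stmt_19_general n x K Q1 Ψ Ψj b hb c hdet S hS bj hbj cj hdetj
end
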